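/- arXiv:2605.23622 — 4 statements merged into one kernel-verified Lean document; each statement's English description precedes it below -/
import Mathlib

section
/- Let Φ be a linear map on the space of n×n complex matrices that is trace-preserving and positive, and satisfies Φ(I) = I (unital). Then every eigenvalue z of Φ satisfies |z| ≤ 1. -/
open scoped ComplexOrder
open Matrix Finset

open scoped MatrixOrder in
lemma psd_entry_abs_le_trace_re {n : ℕ} {M : Matrix (Fin n) (Fin n) ℂ}
    (hM : M.PosSemidef) (i j : Fin n) :
    ‖M i j‖ ≤ M.trace.re := by
  obtain ⟨B, hB⟩ := CStarAlgebra.nonneg_iff_eq_star_mul_self.mp hM.nonneg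
  rw [Matrix.star_eq_conjTranspose] at hB
  subst hB
  have hdiag : ∀ p : Fin n, ((Bᴴ * B) p p).re = ∑ k, ‖B k p‖ ^ 2 := by
    intro p
    rw [Matrix.mul_apply, Complex.re_sum]
    refine Finset.sum_congr rfl fun k _ => ?_
    rw [Matrix.conjTranspose_apply, Complex.star_def, mul_comm, Complex.mul_conj, Complex.sq_norm,
      Complex.ofReal_re]
  have htr : (Bᴴ * B).trace.re = ∑ p, ∑ k, ‖B k p‖ ^ 2 := by
    rw [Matrix.trace, Complex.re_sum]
    exact Finset.sum_congr rfl fun p _ => hdiag p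
  have hcol : ∀ p : Fin n, ∑ k, ‖B k p‖ ^ 2 ≤ (Bᴴ * B).trace.re := by
    intro p
    rw [htr]
    exact Finset.single_le_sum (f := fun q => ∑ k, ‖B k q‖ ^ 2)
      (fun q _ => Finset.sum_nonneg fun k _ => sq_nonneg _) (Finset.mem_univ p)
  calc ‖(Bᴴ * B) i j‖
      ≤ ∑ k, ‖(starRingEnd ℂ) (B k i) * B k j‖ := by
        rw [Matrix.mul_apply]
        simpa [Matrix.conjTranspose_apply] using
          (norm_sum_le Finset.univ (fun k => (starRingEnd ℂ) (B k i) * B k j))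
    _ = ∑ k, ‖B k i‖ * ‖B k j‖ := by
        simp [_root_.map_mul]
    _ ≤ ∑ k, (‖B k i‖ ^ 2 + ‖B k j‖ ^ 2) / 2 := by
        refine Finset.sum_le_sum fun k _ => ?_
        nlinarith [sq_nonneg (‖B k i‖ - ‖B k j‖)]
    _ = ((∑ k, ‖B k i‖ ^ 2) + ∑ k, ‖B k j‖ ^ 2) / 2 := by
        rw [← Finset.sum_add_distrib, Finset.sum_div]
    _ ≤ ((Bᴴ * B).trace.re + (Bᴴ * B).trace.re) / 2 := by
        have := hcol i; have := hcol j; linarith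
    _ = (Bᴴ * B).trace.re := by ring

lemma herm_decomp {n : ℕ} {H : Matrix (Fin n) (Fin n) ℂ} (hH : H.IsHermitian) :
    ∃ P Q : Matrix (Fin n) (Fin n) ℂ, P.PosSemidef ∧ Q.PosSemidef ∧ H = P - Q := by
  set V : Matrix (Fin n) (Fin n) ℂ := (hH.eigenvectorUnitary : Matrix (Fin n) (Fin n) ℂ)
  refine ⟨V * diagonal (fun i => ((max (hH.eigenvalues i) 0 : ℝ) : ℂ)) * Vᴴ,
          V * diagonal (fun i => ((max (-hH.eigenvalues i) 0 : ℝ) : ℂ)) * Vᴴ, ?_, ?_, ?_⟩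
  · exact (Matrix.PosSemidef.diagonal fun i =>
      Complex.zero_le_real.mpr (le_max_right _ _)).mul_mul_conjTranspose_same V
  · exact (Matrix.PosSemidef.diagonal fun i =>
      Complex.zero_le_real.mpr (le_max_right _ _)).mul_mul_conjTranspose_same V
  · have hd : diagonal (RCLike.ofReal ∘ hH.eigenvalues) =
        diagonal (fun i => ((max (hH.eigenvalues i) 0 : ℝ) : ℂ)) -
        diagonal (fun i => ((max (-hH.eigenvalues i) 0 : ℝ) : ℂ)) := by
      rw [Matrix.diagonal_sub]
      exact congrArg diagonal (funext fun i => by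
        rw [← Complex.ofReal_sub, max_zero_sub_max_neg_zero_eq_self]; rfl)
    conv_lhs => rw [hH.spectral_theorem, hd]
    rw [Unitary.conjStarAlgAut_apply, Matrix.mul_sub, Matrix.sub_mul, Matrix.star_eq_conjTranspose]

/-- Every eigenvalue of a trace-preserving, positive, unital linear map on
`n × n` complex matrices has modulus at most `1`. -/
theorem eigenvalue_of_unital_positive_trace_preserving_le_one
    {n : ℕ}
    (Φ : Matrix (Fin n) (Fin n) ℂ →ₗ[ℂ] Matrix (Fin n) (Fin n) ℂ)
    (hpos : ∀ A : Matrix (Fin n) (Fin n) ℂ, A.PosSemidef → (Φ A).PosSemidef)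
    (htp : ∀ A : Matrix (Fin n) (Fin n) ℂ, (Φ A).trace = A.trace)
    (hunital : Φ 1 = 1)
    (z : ℂ) (A : Matrix (Fin n) (Fin n) ℂ) (hA : A ≠ 0)
    (hz : Φ A = z • A) :
    ‖z‖ ≤ 1 := by
  have hpk : ∀ (k : ℕ) (B : Matrix (Fin n) (Fin n) ℂ), B.PosSemidef → ((Φ ^ k) B).PosSemidef := by
    intro k
    induction k with
    | zero => intro B hB; simpa using hB
    | succ k ih =>
      intro B hB
      rw [pow_succ, Module.End.mul_apply]
      exact ih _ (hpos _ hB)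
  have htk : ∀ (k : ℕ) (B : Matrix (Fin n) (Fin n) ℂ), ((Φ ^ k) B).trace = B.trace := by
    intro k
    induction k with
    | zero => intro B; simp
    | succ k ih =>
      intro B
      rw [pow_succ, Module.End.mul_apply, ih, htp]
  have hzk : ∀ k : ℕ, (Φ ^ k) A = (z ^ k) • A := by
    intro k
    induction k with
    | zero => simp
    | succ k ih =>
      rw [pow_succ, Module.End.mul_apply, hz, LinearMap.map_smul, ih, smul_smul, pow_succ, mul_comm]
  set H : Matrix (Fin n) (Fin n) ℂ := ((1 : ℂ)/2) • (A + Aᴴ) with hHdef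
  set K : Matrix (Fin n) (Fin n) ℂ := (-Complex.I/2) • (A - Aᴴ) with hKdef
  have hHh : H.IsHermitian := by
    rw [Matrix.IsHermitian, hHdef, Matrix.conjTranspose_smul, Matrix.conjTranspose_add,
      Matrix.conjTranspose_conjTranspose, add_comm]
    congr 1
    simp [Complex.ext_iff]
  have hKh : K.IsHermitian := by
    rw [Matrix.IsHermitian, hKdef, Matrix.conjTranspose_smul, Matrix.conjTranspose_sub,
      Matrix.conjTranspose_conjTranspose, ← neg_sub A Aᴴ, smul_neg, ← neg_smul]
    congr 1
    simp [Complex.ext_iff]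
    norm_num
  have hAHK : A = H + Complex.I • K := by
    have hI : Complex.I * (-Complex.I / 2) = 1 / 2 := by
      rw [← mul_div_assoc, mul_neg, Complex.I_mul_I, neg_neg]
    rw [hHdef, hKdef, smul_smul, hI]
    module
  obtain ⟨P₁, Q₁, hP₁, hQ₁, hHeq⟩ := herm_decomp hHh
  obtain ⟨P₂, Q₂, hP₂, hQ₂, hKeq⟩ := herm_decomp hKh
  set C : ℝ := P₁.trace.re + Q₁.trace.re + P₂.trace.re + Q₂.trace.re with hCdef
  obtain ⟨i, j, hij⟩ : ∃ i j, A i j ≠ 0 := by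
    by_contra h
    push_neg at h
    exact hA (Matrix.ext fun i j => h i j)
  have habs : ∀ x y : ℂ, ‖x - y‖ ≤ ‖x‖ + ‖y‖ := fun x y => by
    simpa [sub_eq_add_neg] using norm_add_le x (-y)
  have key : ∀ k : ℕ, ‖z‖ ^ k * ‖A i j‖ ≤ C := by
    intro k
    have h1 : (Φ ^ k) A = ((Φ ^ k) P₁ - (Φ ^ k) Q₁) +
        Complex.I • ((Φ ^ k) P₂ - (Φ ^ k) Q₂) := by
      conv_lhs => rw [hAHK, hHeq, hKeq]
      simp [map_add, map_sub, LinearMap.map_smul]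
    have h2 : ((Φ ^ k) A) i j = (((Φ ^ k) P₁) i j - ((Φ ^ k) Q₁) i j) +
        Complex.I * (((Φ ^ k) P₂) i j - ((Φ ^ k) Q₂) i j) := by
      rw [h1]
      simp [Matrix.sub_apply, Matrix.add_apply, Matrix.smul_apply, smul_eq_mul]
    have h3 : ((Φ ^ k) A) i j = z ^ k * A i j := by
      rw [hzk k]; simp [Matrix.smul_apply, smul_eq_mul]
    have b1 : ‖((Φ ^ k) P₁) i j‖ ≤ P₁.trace.re := by
      have := psd_entry_abs_le_trace_re (hpk k _ hP₁) i j
      rwa [htk k P₁] at this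
    have b2 : ‖((Φ ^ k) Q₁) i j‖ ≤ Q₁.trace.re := by
      have := psd_entry_abs_le_trace_re (hpk k _ hQ₁) i j
      rwa [htk k Q₁] at this
    have b3 : ‖((Φ ^ k) P₂) i j‖ ≤ P₂.trace.re := by
      have := psd_entry_abs_le_trace_re (hpk k _ hP₂) i j
      rwa [htk k P₂] at this
    have b4 : ‖((Φ ^ k) Q₂) i j‖ ≤ Q₂.trace.re := by
      have := psd_entry_abs_le_trace_re (hpk k _ hQ₂) i j
      rwa [htk k Q₂] at this
    have t1 := norm_add_le (((Φ ^ k) P₁) i j - ((Φ ^ k) Q₁) i j)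
      (Complex.I * (((Φ ^ k) P₂) i j - ((Φ ^ k) Q₂) i j))
    have t2 := habs (((Φ ^ k) P₁) i j) (((Φ ^ k) Q₁) i j)
    have t3 := habs (((Φ ^ k) P₂) i j) (((Φ ^ k) Q₂) i j)
    have t4 : ‖Complex.I * (((Φ ^ k) P₂) i j - ((Φ ^ k) Q₂) i j)‖ =
        ‖((Φ ^ k) P₂) i j - ((Φ ^ k) Q₂) i j‖ := by
      rw [norm_mul, Complex.norm_I, one_mul]
    have heq : ‖z‖ ^ k * ‖A i j‖ =
        ‖((Φ ^ k) A) i j‖ := by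
      rw [h3, norm_mul, norm_pow]
    rw [heq, h2, hCdef]
    rw [t4] at t1
    linarith
  by_contra hcon
  push_neg at hcon
  have hA0 : 0 < ‖A i j‖ := norm_pos_iff.mpr hij
  have htend := tendsto_pow_atTop_atTop_of_one_lt hcon
  obtain ⟨k, hk⟩ := (htend.eventually_gt_atTop (C / ‖A i j‖)).exists
  rw [div_lt_iff₀ hA0] at hk
  have := key k
  linarith
end

section
/- Let V = exp(i(Jˣ σˣ⊗σˣ + Jʸ σʸ⊗σʸ + Jᶻ σᶻ⊗σᶻ)) and define the 3×3 matrix M with entries M_{μν} = (1/4)·Tr[(I⊗σᵘ) V (σᵛ⊗I) V†] for μ, ν ∈ {x,y,z}. Then M is diagonal with M_{xx} = sin(2Jʸ)sin(2Jᶻ), M_{yy} = sin(2Jᶻ)sin(2Jˣ), M_{zz} = sin(2Jˣ)sin(2Jʸ). -/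
open Matrix Kronecker

set_option maxHeartbeats 4000000
noncomputable section

def σx : Matrix (Fin 2) (Fin 2) ℂ := !![0, 1; 1, 0]
def σy : Matrix (Fin 2) (Fin 2) ℂ := !![0, -Complex.I; Complex.I, 0]
def σz : Matrix (Fin 2) (Fin 2) ℂ := !![1, 0; 0, -1]

/-- The three Pauli matrices, indexed by `Fin 3` (`0 ↦ σˣ`, `1 ↦ σʸ`, `2 ↦ σᶻ`). -/
def pauli : Fin 3 → Matrix (Fin 2) (Fin 2) ℂ := ![σx, σy, σz]

/-! ### Auxiliary setup: Bell-basis diagonalization -/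

def kk (p : Fin 2 × Fin 2) : Fin 4 := ⟨2 * p.1.val + p.2.val, by omega⟩

@[simp] lemma kk00 : kk (0,0) = 0 := by decide
@[simp] lemma kkz : kk 0 = 0 := by decide
@[simp] lemma kko : kk 1 = 3 := by decide
@[simp] lemma kk01 : kk (0,1) = 1 := by decide
@[simp] lemma kk10 : kk (1,0) = 2 := by decide
@[simp] lemma kk11 : kk (1,1) = 3 := by decide

def Umat : Matrix (Fin 2 × Fin 2) (Fin 2 × Fin 2) ℂ :=
  Matrix.of fun p q =>
    (!![1,1,0,0; 0,0,1,1; 0,0,1,-1; 1,-1,0,0] : Matrix (Fin 4) (Fin 4) ℂ) (kk p) (kk q)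

def Uinv : Matrix (Fin 2 × Fin 2) (Fin 2 × Fin 2) ℂ := (1/2 : ℂ) • Umatᵀ

lemma U_mul_Uinv : Umat * Uinv = 1 := by
  ext ⟨i,j⟩ ⟨k,l⟩
  fin_cases i <;> fin_cases j <;> fin_cases k <;> fin_cases l <;>
    simp [Umat, Uinv, kk, Matrix.mul_apply, Fintype.sum_prod_type, Fin.sum_univ_two,
      Matrix.one_apply, Prod.ext_iff] <;> norm_num

lemma Uinv_mul_U : Uinv * Umat = 1 := by
  ext ⟨i,j⟩ ⟨k,l⟩
  fin_cases i <;> fin_cases j <;> fin_cases k <;> fin_cases l <;>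
    simp [Umat, Uinv, kk, Matrix.mul_apply, Fintype.sum_prod_type, Fin.sum_univ_two,
      Matrix.one_apply, Prod.ext_iff] <;> norm_num

def Un : (Matrix (Fin 2 × Fin 2) (Fin 2 × Fin 2) ℂ)ˣ := ⟨Umat, Uinv, U_mul_Uinv, Uinv_mul_U⟩

def lam (Jx Jy Jz : ℝ) (p : Fin 2 × Fin 2) : ℝ :=
  ![Jx - Jy + Jz, -Jx + Jy + Jz, Jx + Jy - Jz, -Jx - Jy - Jz] (kk p)

lemma diag_eq (Jx Jy Jz : ℝ) :
    Complex.I • ((Jx : ℂ) • (σx ⊗ₖ σx) + (Jy : ℂ) • (σy ⊗ₖ σy) + (Jz : ℂ) • (σz ⊗ₖ σz))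
      = Umat * Matrix.diagonal (fun p => Complex.I * (lam Jx Jy Jz p)) * Uinv := by
  ext ⟨i,j⟩ ⟨k,l⟩
  fin_cases i <;> fin_cases j <;> fin_cases k <;> fin_cases l <;>
    (simp [Umat, Uinv, kk, lam, Matrix.mul_apply, Fintype.sum_prod_type, Fin.sum_univ_two,
      Matrix.diagonal, σx, σy, σz, kroneckerMap_apply] ; try (try push_cast ; ring_nf))

lemma exp_conj_diag (Jx Jy Jz : ℝ) :
    NormedSpace.exp (Umat * Matrix.diagonal (fun p => Complex.I * (lam Jx Jy Jz p)) * Uinv)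
      = Umat * Matrix.diagonal (fun p => Complex.exp (Complex.I * (lam Jx Jy Jz p))) * Uinv := by
  have h := Matrix.exp_units_conj Un (Matrix.diagonal (fun p => Complex.I * (lam Jx Jy Jz p)))
  have hc : (↑Un⁻¹ : Matrix (Fin 2 × Fin 2) (Fin 2 × Fin 2) ℂ) = Uinv := rfl
  have hu : (↑Un : Matrix (Fin 2 × Fin 2) (Fin 2 × Fin 2) ℂ) = Umat := rfl
  rw [hc, hu] at h
  rw [h, Matrix.exp_diagonal]
  congr 2
  ext p
  simp [Pi.exp_def, ← Complex.exp_eq_exp_ℂ]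

def Vd (e0 e1 e2 e3 : ℂ) : Matrix (Fin 2 × Fin 2) (Fin 2 × Fin 2) ℂ :=
  Matrix.of fun p q => (!![(e0+e1)/2, 0, 0, (e0-e1)/2;
                          0, (e2+e3)/2, (e2-e3)/2, 0;
                          0, (e2-e3)/2, (e2+e3)/2, 0;
                          (e0-e1)/2, 0, 0, (e0+e1)/2]) (kk p) (kk q)

lemma V_explicit (Jx Jy Jz : ℝ) :
    Umat * Matrix.diagonal (fun p => Complex.exp (Complex.I * (lam Jx Jy Jz p))) * Uinv
      = Vd (Complex.exp (Complex.I * ((Jx:ℂ) - Jy + Jz)))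
           (Complex.exp (Complex.I * (-(Jx:ℂ) + Jy + Jz)))
           (Complex.exp (Complex.I * ((Jx:ℂ) + Jy - Jz)))
           (Complex.exp (Complex.I * (-(Jx:ℂ) - Jy - Jz))) := by
  ext ⟨i,j⟩ ⟨k,l⟩
  fin_cases i <;> fin_cases j <;> fin_cases k <;> fin_cases l <;>
    (simp [Umat, Uinv, Vd, lam, kk, Matrix.mul_apply, Fintype.sum_prod_type,
      Fin.sum_univ_two, Matrix.diagonal] ; try (try push_cast ; ring_nf))

/-- The matrix `M_{μν} = (1/4)·Tr[(I⊗σᵘ) V (σᵛ⊗I) V†]` for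
`V = exp(i(Jˣ σˣ⊗σˣ + Jʸ σʸ⊗σʸ + Jᶻ σᶻ⊗σᶻ))` is diagonal with
`M = diag(sin 2Jʸ sin 2Jᶻ, sin 2Jᶻ sin 2Jˣ, sin 2Jˣ sin 2Jʸ)`. -/
theorem channel_of_V_is_diagonal
    (Jx Jy Jz : ℝ)
    (V : Matrix (Fin 2 × Fin 2) (Fin 2 × Fin 2) ℂ)
    (hV : V = NormedSpace.exp (Complex.I •
      ((Jx : ℂ) • (σx ⊗ₖ σx) + (Jy : ℂ) • (σy ⊗ₖ σy) + (Jz : ℂ) • (σz ⊗ₖ σz))))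
    (M : Matrix (Fin 3) (Fin 3) ℂ)
    (hM : ∀ μ ν, M μ ν = (1 / 4 : ℂ) *
      (((1 : Matrix (Fin 2) (Fin 2) ℂ) ⊗ₖ pauli μ) * V *
        (pauli ν ⊗ₖ (1 : Matrix (Fin 2) (Fin 2) ℂ)) * Vᴴ).trace) :
    M = Matrix.diagonal
      ![((Real.sin (2 * Jy) * Real.sin (2 * Jz) : ℝ) : ℂ),
        ((Real.sin (2 * Jz) * Real.sin (2 * Jx) : ℝ) : ℂ),
        ((Real.sin (2 * Jx) * Real.sin (2 * Jy) : ℝ) : ℂ)] := by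
  have hVd : V = Vd (Complex.exp (Complex.I * ((Jx:ℂ) - Jy + Jz)))
           (Complex.exp (Complex.I * (-(Jx:ℂ) + Jy + Jz)))
           (Complex.exp (Complex.I * ((Jx:ℂ) + Jy - Jz)))
           (Complex.exp (Complex.I * (-(Jx:ℂ) - Jy - Jz))) := by
    rw [hV, diag_eq, exp_conj_diag, V_explicit]
  ext μ ν
  rw [hM, hVd]
  fin_cases μ <;> fin_cases ν <;>
    · simp [Vd, pauli, σx, σy, σz, Matrix.trace, Matrix.mul_apply, Fintype.sum_prod_type,
        Fin.sum_univ_two, Matrix.diag, kroneckerMap_apply, Matrix.conjTranspose_apply,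
        Matrix.one_apply, Matrix.diagonal, map_add, map_sub, map_div₀, _root_.map_mul,
        Prod.ext_iff]
      try simp only [← Complex.exp_conj, _root_.map_mul, map_add, map_sub, map_neg,
        Complex.conj_I, Complex.conj_ofReal, map_ofNat]
      try simp only [Complex.sin]
      try ring_nf
      try simp only [Complex.I_sq, ← Complex.exp_nat_mul, ← Complex.exp_add]
      try ring_nf
      try simp only [← Complex.exp_add]
      try ring_nf

end
end

section
/- Let M(Jˣ,Jʸ,Jᶻ) = diag(sin 2Jʸ sin 2Jᶻ, sin 2Jᶻ sin 2Jˣ, sin 2Jˣ sin 2Jʸ) and Q, R ∈ SO(3). If the 3×3 real matrix Q M Rᵀ has an eigenvalue of modulus 1, then at least two of |sin 2Jˣ|, |sin 2Jʸ|, |sin 2Jᶻ| equal 1. -/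
open Matrix

private lemma map_mul'' (A B : Matrix (Fin 3) (Fin 3) ℝ) :
    (A * B).map Complex.ofReal = A.map Complex.ofReal * B.map Complex.ofReal := by
  ext i j
  simp [Matrix.mul_apply, Matrix.map_apply]

private lemma sumNormSq_mulVec_orthogonal (A : Matrix (Fin 3) (Fin 3) ℝ)
    (hA : Aᵀ * A = 1) (w : Fin 3 → ℂ) :
    ∑ i, Complex.normSq ((A.map Complex.ofReal).mulVec w i)
      = ∑ i, Complex.normSq (w i) := by
  have key : ∀ u : Fin 3 → ℂ,
      ((∑ i, Complex.normSq (u i) : ℝ) : ℂ) = star u ⬝ᵥ u := by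
    intro u
    simp [dotProduct, Complex.normSq_eq_conj_mul_self, Pi.star_apply]
  have h1 : (A.map Complex.ofReal)ᴴ = Aᵀ.map Complex.ofReal := by
    ext i j
    simp [Matrix.conjTranspose_apply, Matrix.map_apply]
  have hAC : (A.map Complex.ofReal)ᴴ * (A.map Complex.ofReal) = 1 := by
    rw [h1, ← map_mul'', hA]
    ext i j
    simp [Matrix.one_apply, Matrix.map_apply, apply_ite Complex.ofReal]
  apply Complex.ofReal_injective
  rw [key, key, Matrix.star_mulVec, Matrix.dotProduct_mulVec, Matrix.vecMul_vecMul,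
    hAC, Matrix.vecMul_one]

private lemma prod_sq_lt (a b : ℝ) (ha : |a| ≤ 1) (hb : |b| < 1) : (a * b) ^ 2 < 1 := by
  rw [← sq_abs, abs_mul]
  have h1 : |a| * |b| ≤ |b| := mul_le_of_le_one_left (abs_nonneg b) ha
  have h2 : 0 ≤ |a| * |b| := mul_nonneg (abs_nonneg a) (abs_nonneg b)
  exact pow_lt_one₀ h2 (lt_of_le_of_lt h1 hb) two_ne_zero

private lemma prod_sq_lt' (a b : ℝ) (ha : |a| < 1) (hb : |b| ≤ 1) : (a * b) ^ 2 < 1 := by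
  rw [mul_comm]; exact prod_sq_lt b a hb ha

/-- If `Q M Rᵀ`, with `Q, R ∈ SO(3)` and
`M = diag(sin 2Jʸ sin 2Jᶻ, sin 2Jᶻ sin 2Jˣ, sin 2Jˣ sin 2Jʸ)`,
has a complex eigenvalue of modulus one, then at least two of
`|sin 2Jˣ|, |sin 2Jʸ|, |sin 2Jᶻ|` equal `1`. -/
theorem peripheral_eigenvalue_requires_dual_unitarity
    (Jx Jy Jz : ℝ)
    (Q R : Matrix (Fin 3) (Fin 3) ℝ)
    (hQ : Qᵀ * Q = 1) (hQdet : Q.det = 1)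
    (hR : Rᵀ * R = 1) (hRdet : R.det = 1)
    (M : Matrix (Fin 3) (Fin 3) ℝ)
    (hM : M = Matrix.diagonal
      ![Real.sin (2 * Jy) * Real.sin (2 * Jz),
        Real.sin (2 * Jz) * Real.sin (2 * Jx),
        Real.sin (2 * Jx) * Real.sin (2 * Jy)])
    (z : ℂ) (hz : ‖z‖ = 1)
    (v : Fin 3 → ℂ) (hv : v ≠ 0)
    (heig : ((Q * M * Rᵀ).map (Complex.ofReal)).mulVec v = z • v) :
    (|Real.sin (2 * Jx)| = 1 ∧ |Real.sin (2 * Jy)| = 1) ∨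
    (|Real.sin (2 * Jy)| = 1 ∧ |Real.sin (2 * Jz)| = 1) ∨
    (|Real.sin (2 * Jx)| = 1 ∧ |Real.sin (2 * Jz)| = 1) := by
  by_contra hcon
  push_neg at hcon
  obtain ⟨hxy, hyz, hxz⟩ := hcon
  set sx := Real.sin (2 * Jx) with hsx
  set sy := Real.sin (2 * Jy) with hsy
  set sz := Real.sin (2 * Jz) with hsz
  have hx1 : |sx| ≤ 1 := abs_le.2 ⟨Real.neg_one_le_sin _, Real.sin_le_one _⟩
  have hy1 : |sy| ≤ 1 := abs_le.2 ⟨Real.neg_one_le_sin _, Real.sin_le_one _⟩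
  have hz1 : |sz| ≤ 1 := abs_le.2 ⟨Real.neg_one_le_sin _, Real.sin_le_one _⟩
  -- at least two of the sines have |·| < 1
  have htwo : (|sx| < 1 ∧ |sy| < 1) ∨ (|sy| < 1 ∧ |sz| < 1) ∨ (|sx| < 1 ∧ |sz| < 1) := by
    by_cases hx : |sx| = 1
    · exact Or.inr (Or.inl ⟨lt_of_le_of_ne hy1 (hxy hx), lt_of_le_of_ne hz1 (hxz hx)⟩)
    · by_cases hy : |sy| = 1
      · exact Or.inr (Or.inr ⟨lt_of_le_of_ne hx1 hx, lt_of_le_of_ne hz1 (hyz hy)⟩)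
      · exact Or.inl ⟨lt_of_le_of_ne hx1 hx, lt_of_le_of_ne hy1 hy⟩
  -- all three products have square < 1
  obtain ⟨hp0, hp1, hp2⟩ :
      (sy * sz) ^ 2 < 1 ∧ (sz * sx) ^ 2 < 1 ∧ (sx * sy) ^ 2 < 1 := by
    rcases htwo with ⟨h1, h2⟩ | ⟨h1, h2⟩ | ⟨h1, h2⟩
    · exact ⟨prod_sq_lt' sy sz h2 hz1, prod_sq_lt sz sx hz1 h1, prod_sq_lt' sx sy h1 hy1⟩
    · exact ⟨prod_sq_lt' sy sz h1 hz1, prod_sq_lt' sz sx h2 hx1, prod_sq_lt sx sy hx1 h1⟩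
    · exact ⟨prod_sq_lt sy sz hy1 h2, prod_sq_lt' sz sx h2 hx1, prod_sq_lt' sx sy h1 hy1⟩
  -- analytic part
  set d : Fin 3 → ℝ := ![sy * sz, sz * sx, sx * sy] with hd
  have hRR : (Rᵀ)ᵀ * Rᵀ = 1 := by
    rw [Matrix.transpose_transpose]; exact mul_eq_one_comm.mp hR
  set w : Fin 3 → ℂ := (Rᵀ.map Complex.ofReal).mulVec v with hwdef
  have hw : ∑ i, Complex.normSq (w i) = ∑ i, Complex.normSq (v i) :=
    sumNormSq_mulVec_orthogonal Rᵀ hRR v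
  have hsplit : ((Q * M * Rᵀ).map Complex.ofReal).mulVec v
      = (Q.map Complex.ofReal).mulVec ((M.map Complex.ofReal).mulVec w) := by
    rw [map_mul'', map_mul'', hwdef, Matrix.mulVec_mulVec, Matrix.mulVec_mulVec]
  have hQnorm : ∑ i, Complex.normSq (((Q * M * Rᵀ).map Complex.ofReal).mulVec v i)
      = ∑ i, Complex.normSq ((M.map Complex.ofReal).mulVec w i) := by
    rw [hsplit]; exact sumNormSq_mulVec_orthogonal Q hQ _
  have hMdiag : ∀ i, (M.map Complex.ofReal).mulVec w i = (d i : ℂ) * w i := by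
    intro i
    rw [hM, Matrix.diagonal_map (by simp), Matrix.mulVec_diagonal]
  have hMnorm : ∑ i, Complex.normSq ((M.map Complex.ofReal).mulVec w i)
      = ∑ i, (d i) ^ 2 * Complex.normSq (w i) := by
    refine Finset.sum_congr rfl fun i _ => ?_
    rw [hMdiag i, Complex.normSq_mul, Complex.normSq_ofReal, sq]
  have hzv : ∑ i, Complex.normSq ((z • v) i) = ∑ i, Complex.normSq (v i) := by
    have hz2 : Complex.normSq z = 1 := by
      rw [Complex.normSq_eq_norm_sq, hz]; norm_num
    refine Finset.sum_congr rfl fun i _ => ?_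
    simp [Pi.smul_apply, smul_eq_mul, Complex.normSq_mul, hz2]
  have hkey : ∑ i, (d i) ^ 2 * Complex.normSq (w i) = ∑ i, Complex.normSq (w i) := by
    rw [← hMnorm, ← hQnorm, heig, hzv, ← hw]
  have hvpos : 0 < ∑ i, Complex.normSq (v i) := by
    obtain ⟨i, hi⟩ := Function.ne_iff.mp hv
    exact Finset.sum_pos' (fun j _ => Complex.normSq_nonneg _)
      ⟨i, Finset.mem_univ i, Complex.normSq_pos.2 hi⟩
  have hwpos : 0 < ∑ i, Complex.normSq (w i) := hw ▸ hvpos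
  simp only [Fin.sum_univ_three] at hkey hwpos
  have hd0 : d 0 = sy * sz := rfl
  have hd1 : d 1 = sz * sx := rfl
  have hd2 : d 2 = sx * sy := rfl
  rw [hd0, hd1, hd2] at hkey
  set s0 := Complex.normSq (w 0)
  set s1 := Complex.normSq (w 1)
  set s2 := Complex.normSq (w 2)
  have h0 : 0 ≤ s0 := Complex.normSq_nonneg _
  have h1 : 0 ≤ s1 := Complex.normSq_nonneg _
  have h2 : 0 ≤ s2 := Complex.normSq_nonneg _
  have : s0 > 0 ∨ s1 > 0 ∨ s2 > 0 := by
    by_contra hc; push_neg at hc; obtain ⟨a, b, c⟩ := hc; linarith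
  rcases this with hp | hp | hp
  · linarith [mul_pos (by linarith : (0:ℝ) < 1 - (sy*sz)^2) hp,
      mul_nonneg (by linarith : (0:ℝ) ≤ 1 - (sz*sx)^2) h1,
      mul_nonneg (by linarith : (0:ℝ) ≤ 1 - (sx*sy)^2) h2]
  · linarith [mul_nonneg (by linarith : (0:ℝ) ≤ 1 - (sy*sz)^2) h0,
      mul_pos (by linarith : (0:ℝ) < 1 - (sz*sx)^2) hp,
      mul_nonneg (by linarith : (0:ℝ) ≤ 1 - (sx*sy)^2) h2]
  · linarith [mul_nonneg (by linarith : (0:ℝ) ≤ 1 - (sy*sz)^2) h0,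
      mul_nonneg (by linarith : (0:ℝ) ≤ 1 - (sz*sx)^2) h1,
      mul_pos (by linarith : (0:ℝ) < 1 - (sx*sy)^2) hp]
end

section
/- Let Φ₁ act on single-qudit operators and Φ₂ on two-qudit operators via the brickwork construction: Φ₂(ρ) = (1/d)·Tr₁[(U⊗I)(I⊗U)(ρ ⊗ I)(I⊗U†)(U†⊗I)] restricted appropriately. If Φ₁(A) = z·A, then Φ₂(A ⊗ I) = z·(A ⊗ I). Consequently the spectrum of Φ₁ is a subset of the spectrum of Φ₂. -/
open Matrix Kronecker

noncomputable section

/-- The partial trace over the first factor of a two-qudit space. -/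
def partialTrace₁ {d : ℕ} (M : Matrix (Fin d × Fin d) (Fin d × Fin d) ℂ) :
    Matrix (Fin d) (Fin d) ℂ :=
  Matrix.of fun j j' => ∑ i : Fin d, M (i, j) (i, j')

/-- The partial trace over the first factor of a three-qudit space. -/
def partialTrace₁' {d : ℕ}
    (M : Matrix (Fin d × Fin d × Fin d) (Fin d × Fin d × Fin d) ℂ) :
    Matrix (Fin d × Fin d) (Fin d × Fin d) ℂ :=
  Matrix.of fun j j' => ∑ i : Fin d, M (i, j) (i, j')

/-- `U` acting on qudits 1 and 2 of a three-qudit chain. -/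
def U12 {d : ℕ} (U : Matrix (Fin d × Fin d) (Fin d × Fin d) ℂ) :
    Matrix (Fin d × Fin d × Fin d) (Fin d × Fin d × Fin d) ℂ :=
  Matrix.of fun p q => U (p.1, p.2.1) (q.1, q.2.1) * (if p.2.2 = q.2.2 then 1 else 0)

/-- `U` acting on qudits 2 and 3 of a three-qudit chain. -/
def U23 {d : ℕ} (U : Matrix (Fin d × Fin d) (Fin d × Fin d) ℂ) :
    Matrix (Fin d × Fin d × Fin d) (Fin d × Fin d × Fin d) ℂ :=
  Matrix.of fun p q => (if p.1 = q.1 then 1 else 0) * U p.2 q.2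

/-- A two-qudit operator extended by the identity on a third qudit. -/
def extendId {d : ℕ} (ρ : Matrix (Fin d × Fin d) (Fin d × Fin d) ℂ) :
    Matrix (Fin d × Fin d × Fin d) (Fin d × Fin d × Fin d) ℂ :=
  Matrix.of fun p q => ρ (p.1, p.2.1) (q.1, q.2.1) * (if p.2.2 = q.2.2 then 1 else 0)

/-! Conjugating `A ⊗ I ⊗ I` by `U₂₃ = I ⊗ U` does nothing, since `U₂₃` acts only on the qudits
where `A ⊗ I ⊗ I` is the identity. What remains is `U₁₂ (A ⊗ I ⊗ I) U₁₂† = (U (A ⊗ I) U†) ⊗ I`,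
whose partial trace over the first qudit is `d · Φ₁(A) ⊗ I`. So `A ↦ A ⊗ I` carries eigenvectors
of `Φ₁` to eigenvectors of `Φ₂` with the same eigenvalue, and it is injective. -/

section Brickwork

variable {d : ℕ}

theorem U23_eq_one_kronecker (V : Matrix (Fin d × Fin d) (Fin d × Fin d) ℂ) :
    U23 V = (1 : Matrix (Fin d) (Fin d) ℂ) ⊗ₖ V := by
  ext p q
  simp [U23, one_apply]

theorem extendId_eq_reindex (ρ : Matrix (Fin d × Fin d) (Fin d × Fin d) ℂ) :
    extendId ρ = reindex (Equiv.prodAssoc _ _ _) (Equiv.prodAssoc _ _ _)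
      (ρ ⊗ₖ (1 : Matrix (Fin d) (Fin d) ℂ)) := by
  ext p q
  simp [extendId, one_apply]

theorem U12_eq_extendId (V : Matrix (Fin d × Fin d) (Fin d × Fin d) ℂ) :
    U12 V = extendId V := rfl

theorem extendId_mul (M N : Matrix (Fin d × Fin d) (Fin d × Fin d) ℂ) :
    extendId M * extendId N = extendId (M * N) := by
  simp only [extendId_eq_reindex, reindex_apply, submatrix_mul_equiv]
  rw [← mul_kronecker_mul, mul_one]

theorem conjTranspose_extendId (M : Matrix (Fin d × Fin d) (Fin d × Fin d) ℂ) :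
    (extendId M)ᴴ = extendId Mᴴ := by
  simp only [extendId_eq_reindex, reindex_apply, conjTranspose_submatrix, conjTranspose_kronecker,
    conjTranspose_one]

theorem extendId_kronecker_one (A : Matrix (Fin d) (Fin d) ℂ) :
    extendId (A ⊗ₖ (1 : Matrix (Fin d) (Fin d) ℂ)) =
      A ⊗ₖ (1 : Matrix (Fin d × Fin d) (Fin d × Fin d) ℂ) := by
  rw [extendId_eq_reindex, kronecker_assoc, one_kronecker_one]

theorem commute_extendId_kronecker_one_U23 (A : Matrix (Fin d) (Fin d) ℂ)
    (V : Matrix (Fin d × Fin d) (Fin d × Fin d) ℂ) :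
    Commute (extendId (A ⊗ₖ (1 : Matrix (Fin d) (Fin d) ℂ))) (U23 V) := by
  rw [extendId_kronecker_one, U23_eq_one_kronecker, Commute, SemiconjBy, ← mul_kronecker_mul,
    ← mul_kronecker_mul, mul_one, one_mul, mul_one, one_mul]

theorem U23_mul_conjTranspose_U23 {V : Matrix (Fin d × Fin d) (Fin d × Fin d) ℂ}
    (hV : V * Vᴴ = 1) : U23 V * (U23 V)ᴴ = 1 := by
  rw [U23_eq_one_kronecker, conjTranspose_kronecker, conjTranspose_one, ← mul_kronecker_mul,
    mul_one, hV, one_kronecker_one]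

theorem partialTrace₁'_extendId (N : Matrix (Fin d × Fin d) (Fin d × Fin d) ℂ) :
    partialTrace₁' (extendId N) = partialTrace₁ N ⊗ₖ (1 : Matrix (Fin d) (Fin d) ℂ) := by
  ext p q
  simp [partialTrace₁, partialTrace₁', extendId, one_apply]

theorem brickwork_conj_extendId_kronecker_one {V : Matrix (Fin d × Fin d) (Fin d × Fin d) ℂ}
    (hV : V * Vᴴ = 1) (A : Matrix (Fin d) (Fin d) ℂ) :
    U12 V * U23 V * extendId (A ⊗ₖ (1 : Matrix (Fin d) (Fin d) ℂ)) * (U23 V)ᴴ * (U12 V)ᴴ =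
      extendId (V * (A ⊗ₖ (1 : Matrix (Fin d) (Fin d) ℂ)) * Vᴴ) := by
  rw [mul_assoc (U12 V), ← (commute_extendId_kronecker_one_U23 A V).eq]
  simp only [mul_assoc]
  rw [← mul_assoc (U23 V), U23_mul_conjTranspose_U23 hV, one_mul, U12_eq_extendId,
    conjTranspose_extendId, extendId_mul, extendId_mul]

theorem kronecker_one_ne_zero {n R : Type*} [DecidableEq n] [MulZeroOneClass R]
    {A : Matrix n n R} (hA : A ≠ 0) : A ⊗ₖ (1 : Matrix n n R) ≠ 0 := by
  contrapose! hA
  ext i j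
  simpa using congr_fun₂ hA (i, i) (j, i)

end Brickwork

/-- If `Φ₁(A) = z·A` then `Φ₂(A ⊗ I) = z·(A ⊗ I)`; consequently the spectrum of
`Φ₁` is a subset of the spectrum of `Φ₂`. -/
theorem spectrum_Phi1_subset_spectrum_Phi2
    {d : ℕ} (U : Matrix (Fin d × Fin d) (Fin d × Fin d) ℂ)
    (hU : U ∈ Matrix.unitaryGroup (Fin d × Fin d) ℂ)
    (Φ₁ : Matrix (Fin d) (Fin d) ℂ → Matrix (Fin d) (Fin d) ℂ)
    (hΦ₁ : ∀ ρ, Φ₁ ρ = ((d : ℂ)⁻¹) •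
      partialTrace₁ (U * (ρ ⊗ₖ (1 : Matrix (Fin d) (Fin d) ℂ)) * Uᴴ))
    (Φ₂ : Matrix (Fin d × Fin d) (Fin d × Fin d) ℂ →
      Matrix (Fin d × Fin d) (Fin d × Fin d) ℂ)
    (hΦ₂ : ∀ ρ, Φ₂ ρ = ((d : ℂ)⁻¹) •
      partialTrace₁' (U12 U * U23 U * extendId ρ * (U23 U)ᴴ * (U12 U)ᴴ))
    (z : ℂ) (A : Matrix (Fin d) (Fin d) ℂ) (hA : Φ₁ A = z • A) :
    Φ₂ (A ⊗ₖ (1 : Matrix (Fin d) (Fin d) ℂ)) =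
        z • (A ⊗ₖ (1 : Matrix (Fin d) (Fin d) ℂ)) ∧
      (A ≠ 0 → ∃ B : Matrix (Fin d × Fin d) (Fin d × Fin d) ℂ,
        B ≠ 0 ∧ Φ₂ B = z • B) := by
  have hUunit : U * Uᴴ = 1 := mem_unitaryGroup_iff.mp hU
  have heigen : Φ₂ (A ⊗ₖ (1 : Matrix (Fin d) (Fin d) ℂ)) =
      z • (A ⊗ₖ (1 : Matrix (Fin d) (Fin d) ℂ)) := by
    rw [hΦ₂, brickwork_conj_extendId_kronecker_one hUunit, partialTrace₁'_extendId,
      ← smul_kronecker, ← hΦ₁, hA, smul_kronecker]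
  exact ⟨heigen, fun hA0 => ⟨_, kronecker_one_ne_zero hA0, heigen⟩⟩

end
end
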